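/- Normalization commutes with taking elements: for every term t, the set of normal forms of elems(t) equals elems(⌈t⌉). -/
import Mathlib


inductive BinOp : Type
  | enc | aenc | pair | sig
deriving DecidableEq

inductive Term : Type
  | atom : ℕ → Term
  | var  : ℕ → Term
  | bin  : BinOp → Term → Term → Term
  | priv : Term → Term
  | aci  : List Term → Term

def Term.subst (σ : ℕ → Term) : Term → Term
  | .atom a => .atom a
  | .var x => σ x
  | .bin o p q => .bin o (p.subst σ) (q.subst σ)
  | .priv t => .priv (t.subst σ)
  | .aci L => .aci (L.attach.map fun p => p.1.subst σ)
decreasing_by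
  all_goals simp_wf
  all_goals first
    | omega
    | (have := List.sizeOf_lt_of_mem p.2; omega)

def Term.elems : Term → Set Term
  | .aci L => ⋃ p ∈ L.attach, p.1.elems
  | t => {t}
decreasing_by
  have := List.sizeOf_lt_of_mem p.2; simp_wf; omega

def Term.subDag : Term → Set Term
  | .atom a => {.atom a}
  | .var x => {.var x}
  | .bin o p q => insert (.bin o p q) (p.subDag ∪ q.subDag)
  | .priv t => insert (.priv t) t.subDag
  | .aci L => insert (.aci L) (⋃ p ∈ L.attach, p.1.subDag)
decreasing_by
  all_goals simp_wf
  all_goals first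
    | omega
    | (have := List.sizeOf_lt_of_mem p.2; omega)

def Term.vars (t : Term) : Set ℕ := {x | Term.var x ∈ t.subDag}

def Term.Ground (t : Term) : Prop := t.vars = ∅

/-- Specification of the quasi-subterm function `sub`. -/
structure SubSpec where
  sub : Term → Set Term
  sub_atom : ∀ a, sub (.atom a) = {.atom a}
  sub_var : ∀ x, sub (.var x) = {.var x}
  sub_priv : ∀ t, sub (.priv t) = insert (.priv t) (sub t)
  sub_bin : ∀ o p q, sub (.bin o p q) = insert (.bin o p q) (sub p ∪ sub q)
  sub_aci : ∀ L, sub (.aci L) = insert (.aci L) (⋃ p ∈ (Term.aci L).elems, sub p)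

/-- Specification of the ACI normal form with respect to a strict total order `lt`. -/
structure NormSpec (lt : Term → Term → Prop) where
  nf : Term → Term
  nf_atom : ∀ a, nf (.atom a) = .atom a
  nf_var  : ∀ x, nf (.var x) = .var x
  nf_bin  : ∀ o p q, nf (.bin o p q) = .bin o (nf p) (nf q)
  nf_priv : ∀ t, nf (.priv t) = .priv (nf t)
  nf_aci_single : ∀ L t', nf '' (Term.aci L).elems = {t'} → nf (.aci L) = t'
  nf_aci : ∀ L, (¬ ∃ t', nf '' (Term.aci L).elems = {t'}) →
      ∃ L' : List Term, List.Pairwise lt L' ∧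
        (∀ s, s ∈ L' ↔ s ∈ nf '' (Term.aci L).elems) ∧ nf (.aci L) = .aci L'

/-- The derivable closure of a set `E` of terms under a deduction system `R`,
given as a set of rules (premises, conclusion): the least superset of `E`
closed under the rules. -/
inductive Der (R : Set (Set Term × Term)) (E : Set Term) : Term → Prop where
  | base {t : Term} : t ∈ E → Der R E t
  | step {l : Set Term} {r : Term} : (l, r) ∈ R → (∀ s ∈ l, Der R E s) → Der R E r

/-- The composition rules of the DY+ACI deduction system (for normal form `nf`). -/
inductive DYComp (nf : Term → Term) : Set Term → Term → Prop where
  | enc  (t₁ t₂ : Term) : DYComp nf {t₁, t₂} (nf (.bin .enc t₁ t₂))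
  | aenc (t₁ t₂ : Term) : DYComp nf {t₁, t₂} (nf (.bin .aenc t₁ t₂))
  | pair (t₁ t₂ : Term) : DYComp nf {t₁, t₂} (nf (.bin .pair t₁ t₂))
  | sig  (t₁ t₂ : Term) : DYComp nf {t₁, .priv t₂} (nf (.bin .sig t₁ (.priv t₂)))
  | aci  (L : List Term) (h : L ≠ []) : DYComp nf {t | t ∈ L} (nf (.aci L))

/-- The composition rules of DY+ACI other than the ACI-set construction rule. -/
inductive DYCompNoACI (nf : Term → Term) : Set Term → Term → Prop where
  | enc  (t₁ t₂ : Term) : DYCompNoACI nf {t₁, t₂} (nf (.bin .enc t₁ t₂))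
  | aenc (t₁ t₂ : Term) : DYCompNoACI nf {t₁, t₂} (nf (.bin .aenc t₁ t₂))
  | pair (t₁ t₂ : Term) : DYCompNoACI nf {t₁, t₂} (nf (.bin .pair t₁ t₂))
  | sig  (t₁ t₂ : Term) : DYCompNoACI nf {t₁, .priv t₂} (nf (.bin .sig t₁ (.priv t₂)))

/-- The decomposition rules of the DY+ACI deduction system. -/
inductive DYDecomp (nf : Term → Term) : Set Term → Term → Prop where
  | enc  (t₁ t₂ : Term) : DYDecomp nf {.bin .enc t₁ t₂, nf t₂} (nf t₁)
  | aenc (t₁ t₂ : Term) : DYDecomp nf {.bin .aenc t₁ t₂, nf (.priv t₂)} (nf t₁)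
  | fst  (t₁ t₂ : Term) : DYDecomp nf {.bin .pair t₁ t₂} (nf t₁)
  | snd  (t₁ t₂ : Term) : DYDecomp nf {.bin .pair t₁ t₂} (nf t₂)
  | aci  (L : List Term) (t : Term) (h : t ∈ L) : DYDecomp nf {.aci L} (nf t)

/-- The DY+ACI deduction system as a set of rules. -/
def DYACI (nf : Term → Term) : Set (Set Term × Term) :=
  {p | DYComp nf p.1 p.2 ∨ DYDecomp nf p.1 p.2}

/-- A ground substitution `σ` is a model of a constraint system
`S = {Eᵢ ▷ tᵢ}` if `⌈tᵢσ⌉` is derivable from `⌈Eᵢσ⌉` in DY+ACI. -/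
def Models (nf : Term → Term) (σ : ℕ → Term) (S : List (Set Term × Term)) : Prop :=
  ∀ c ∈ S, Der (DYACI nf) (nf '' ((fun t => t.subst σ) '' c.1)) (nf (c.2.subst σ))

/-- All terms occurring in a constraint system. -/
def termsOf (S : List (Set Term × Term)) : Set Term :=
  ⋃ c ∈ S, c.1 ∪ {c.2}

/-- DAG-subterms of a constraint system. -/
def subDagS (S : List (Set Term × Term)) : Set Term :=
  ⋃ t ∈ termsOf S, t.subDag

/-- Variables of a constraint system. -/
def varsS (S : List (Set Term × Term)) : Set ℕ :=
  {x | Term.var x ∈ subDagS S}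

/-- Applying a substitution to a constraint system. -/
def substS (θ : ℕ → Term) (S : List (Set Term × Term)) : List (Set Term × Term) :=
  S.map fun c => ((fun t => t.subst θ) '' c.1, c.2.subst θ)

/-- The domain of a substitution. -/
def dom (θ : ℕ → Term) : Set ℕ := {x | θ x ≠ .var x}

lemma elems_atom (a : ℕ) : (Term.atom a).elems = {Term.atom a} := by rw [Term.elems] <;> simp
lemma elems_var (x : ℕ) : (Term.var x).elems = {Term.var x} := by rw [Term.elems] <;> simp
lemma elems_bin (o p q) : (Term.bin o p q).elems = {Term.bin o p q} := by rw [Term.elems] <;> simp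
lemma elems_priv (t) : (Term.priv t).elems = {Term.priv t} := by rw [Term.elems] <;> simp <;> simp
lemma elems_aci (L : List Term) : (Term.aci L).elems = ⋃ p ∈ L, p.elems := by
  rw [Term.elems]
  ext s
  simp

/-- A term that is not an ACI term. -/
def Term.NotAci : Term → Prop
  | .aci _ => False
  | _ => True

lemma elems_of_notAci {t : Term} (h : t.NotAci) : t.elems = {t} := by
  cases t <;> first
    | exact elems_atom _
    | exact elems_var _
    | exact elems_bin _ _ _
    | exact elems_priv _
    | exact absurd h (by simp [Term.NotAci])

lemma notAci_of_mem_elems : ∀ t : Term, ∀ s ∈ t.elems, s.NotAci := by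
  intro t
  induction t using Term.elems.induct with
  | case1 L ih =>
    intro s hs
    rw [elems_aci] at hs
    simp only [Set.mem_iUnion] at hs
    obtain ⟨p, hp, hsp⟩ := hs
    exact ih ⟨p, hp⟩ s hsp
  | case2 t h =>
    intro s hs
    have ht : t.NotAci := by
      cases t <;> first | trivial | exact (h _ rfl)
    rw [elems_of_notAci ht, Set.mem_singleton_iff] at hs
    subst hs; exact ht

lemma nf_notAci (lt : Term → Term → Prop) (N : NormSpec lt) {t : Term}
    (h : t.NotAci) : (N.nf t).NotAci := by
  cases t with
  | atom a => rw [N.nf_atom]; trivial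
  | var x => rw [N.nf_var]; trivial
  | bin o p q => rw [N.nf_bin]; trivial
  | priv t => rw [N.nf_priv]; trivial
  | aci L => exact absurd h (by simp [Term.NotAci])

/-- Normalization commutes with taking elements. -/
theorem norm_elems (lt : Term → Term → Prop) (hlt : IsStrictTotalOrder Term lt)
    (N : NormSpec lt) : ∀ t : Term, N.nf '' t.elems = (N.nf t).elems := by
  intro t
  cases t with
  | atom a => rw [elems_atom, N.nf_atom, elems_atom, Set.image_singleton, N.nf_atom]
  | var x => rw [elems_var, N.nf_var, elems_var, Set.image_singleton, N.nf_var]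
  | bin o p q => rw [elems_bin, N.nf_bin, elems_bin, Set.image_singleton, N.nf_bin]
  | priv t => rw [elems_priv, N.nf_priv, elems_priv, Set.image_singleton, N.nf_priv]
  | aci L =>
    by_cases hsing : ∃ t', N.nf '' (Term.aci L).elems = {t'}
    · obtain ⟨t', ht'⟩ := hsing
      rw [N.nf_aci_single L t' ht', ht']
      have : t' ∈ N.nf '' (Term.aci L).elems := by rw [ht']; rfl
      obtain ⟨s, hs, rfl⟩ := this
      exact (elems_of_notAci
        (nf_notAci lt N (notAci_of_mem_elems _ s hs))).symm
    · obtain ⟨L', _, hiff, heq⟩ := N.nf_aci L hsing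
      rw [heq, elems_aci L']
      ext s
      rw [Set.mem_iUnion₂]
      constructor
      · intro hs
        refine ⟨s, (hiff s).mpr hs, ?_⟩
        obtain ⟨u, hu, rfl⟩ := hs
        rw [elems_of_notAci (nf_notAci lt N (notAci_of_mem_elems _ u hu))]
        rfl
      · rintro ⟨p, hp, hsp⟩
        have hp' := (hiff p).mp hp
        obtain ⟨u, hu, rfl⟩ := hp'
        rw [elems_of_notAci (nf_notAci lt N (notAci_of_mem_elems _ u hu))] at hsp
        rw [hsp]
        exact ⟨u, hu, rfl⟩
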